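/- Let M be the free monoid on the alphabet of positive integers {1, 2, 3, …}, with weight ω(n_1⋯n_r) = n_1 + ⋯ + n_r, and let C_n be the components of the Lazard right composition of (M, ω). In the monoid algebra ℚ[M], set Q_n = Σ_{w ∈ C_n} w. Then for every n ≥ 1, the single-letter word n, viewed as an element of ℚ[M], satisfies: n = Σ_{k≥1} (−1)^{k+1} Σ Q_{i_1}·Q_{i_2}⋯Q_{i_k}, where the inner sum ranges over all strictly decreasing sequences i_1 > i_2 > ⋯ > i_k of positive integers with i_1 + ⋯ + i_k = n. (This is the expansion of the noncommutative elementary symmetric function Λ̃_n on the basis of products of noncommutative Witt symmetric functions.) -/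

import Mathlib

/-- The weight of a word over the alphabet of positive integers: the sum of its
letters. -/
def FreeMonoid.wt (w : FreeMonoid ℕ+) : ℕ :=
  (w.toList.map (fun x : ℕ+ => (x : ℕ))).sum

/-- The sets `Z_n` of the Lazard right composition of the free monoid on the
positive integers, weighted by the sum of the letters: `Z_1` is the set of
single-letter words and `Z_{n+1} = (Z_n \ C_n)·C_n*` where
`C_n = {w ∈ Z_n : ω(w) = n}`.  (The value at `0` is junk, set to `∅`.) -/
def lazardZ : ℕ → Set (FreeMonoid ℕ+)
  | 0 => ∅
  | 1 => Set.range FreeMonoid.of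
  | (n + 2) =>
      {w | ∃ z ∈ lazardZ (n + 1), z.wt ≠ n + 1 ∧
        ∃ u ∈ Submonoid.closure {v | v ∈ lazardZ (n + 1) ∧ v.wt = n + 1}, w = z * u}

/-- The sets `C_n = {w ∈ Z_n : ω(w) = n}` of the Lazard right composition. -/
def lazardC (n : ℕ) : Set (FreeMonoid ℕ+) :=
  {w | w ∈ lazardZ n ∧ w.wt = n}

/-- The noncommutative Witt symmetric function `Q_n`, specialized in the monoid
algebra `ℚ[M]`: the (finite) sum of the words in `C_n`. -/
noncomputable def Q (n : ℕ) : MonoidAlgebra ℚ (FreeMonoid ℕ+) :=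
  ∑ᶠ w ∈ lazardC n, MonoidAlgebra.of ℚ (FreeMonoid ℕ+) w

/-!
Each `Z_{n+1} = (Z_n \ C_n) C_n*` is a code (factorizations over it are unique): a factorization
over `Z_{n+1}` flattens to one over `Z_n`, unique by induction, from which the blocks
`a c₁ ⋯ c_r` (`a ∉ C_n`, `cᵢ ∈ C_n`) are recovered by cutting before every factor outside `C_n`.
Hence `Z_n ∪ Z_{n+1} C_n = C_n ∪ Z_{n+1}` with both unions disjoint and the products unique, so the
sums `F n k` of the weight-`k` words of `Z_n` satisfy
`F n (k + n) + F (n + 1) k * Q n = [k = 0] Q n + F (n + 1) (k + n)`, and `F n k = 0` for `k < n`.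
The alternating sums over strictly decreasing sequences with parts `≥ n` obey the same recursion
(split off a last part equal to `n`), so the two families agree; at `n = 1` the weight-`k` part of
`Z_1` is the single letter `k`.
-/

open Pointwise FreeMonoid

theorem List.isChain_of_forall_mem_tail {α : Type*} {R : α → α → Prop} :
    ∀ {l : List α}, (∀ x ∈ l, ∀ y ∈ l.tail, R x y) → l.IsChain R
  | [], _ => .nil
  | [_], _ => .singleton _
  | a :: b :: l, h => .cons_cons (h a (by simp) b (by simp))
      (List.isChain_of_forall_mem_tail fun x hx y hy => h x (by simp_all) y (by simp_all))

theorem List.splitBy_flatten_of_forall_eq_cons {α : Type*} {B : Set α} [DecidablePred (· ∈ B)]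
    {L : List (List α)} (hL : ∀ b ∈ L, ∃ a ∉ B, ∃ cs : List α, (∀ c ∈ cs, c ∈ B) ∧ b = a :: cs) :
    L.flatten.splitBy (fun _ y => decide (y ∈ B)) = L := by
  refine List.splitBy_flatten (fun h => ?_) (fun b hb => ?_) ?_
  · obtain ⟨a, -, cs, -, h⟩ := hL [] h
    exact List.cons_ne_nil a cs h.symm
  · obtain ⟨a, -, cs, hcs, rfl⟩ := hL b hb
    exact List.isChain_of_forall_mem_tail fun _ _ c hc => by simpa using hcs c hc
  · refine List.isChain_of_forall_mem_tail fun x hx b hb => ?_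
    obtain ⟨a, ha, cs, -, rfl⟩ := hL b (List.mem_of_mem_tail hb)
    obtain ⟨a', -, cs', -, rfl⟩ := hL x hx
    exact ⟨List.cons_ne_nil _ _, List.cons_ne_nil _ _, decide_eq_false ha⟩

theorem List.isChain_gt_append_singleton {l : List ℕ} {x : ℕ} :
    (l ++ [x]).IsChain (· > ·) ↔ l.IsChain (· > ·) ∧ ∀ i ∈ l, x < i := by
  simp [List.isChain_iff_pairwise, List.pairwise_append]

section Code

variable {M : Type*} {S B : Set M}

def IsBlock (S B : Set M) (b : List M) : Prop :=
  ∃ a ∈ S \ B, ∃ cs : List M, (∀ c ∈ cs, c ∈ B) ∧ b = a :: cs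

theorem IsBlock.forall_mem (hB : B ⊆ S) {b : List M} (hb : IsBlock S B b) : ∀ x ∈ b, x ∈ S := by
  obtain ⟨a, ha, cs, hcs, rfl⟩ := hb
  rintro x (_ | ⟨_, hx⟩)
  exacts [ha.1, hB (hcs x hx)]

theorem IsBlock.forall_mem_append_singleton (hB : B ⊆ S) {b : List M} (hb : IsBlock S B b)
    {c : M} (hc : c ∈ B) : ∀ x ∈ b ++ [c], x ∈ S :=
  List.forall_mem_append.2 ⟨hb.forall_mem hB, List.forall_mem_singleton.2 (hB hc)⟩

variable [Monoid M]

def IsCode (S : Set M) : Prop :=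
  Set.InjOn List.prod {l : List M | ∀ x ∈ l, x ∈ S}

theorem mul_closure_eq_union_mul (A B : Set M) :
    A * (Submonoid.closure B : Set M) = A ∪ A * Submonoid.closure B * B := by
  ext x
  constructor
  · rintro ⟨a, ha, u, hu, rfl⟩
    induction hu using Submonoid.closure_induction_right with
    | one => exact .inl (by simpa using ha)
    | mul_right u hu c hc _ => exact .inr ⟨a * u, ⟨a, ha, u, hu, rfl⟩, c, hc, mul_assoc ..⟩
  · rintro (ha | ⟨_, ⟨a, ha, u, hu, rfl⟩, c, hc, rfl⟩)
    · exact ⟨x, ha, 1, one_mem _, mul_one x⟩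
    · exact ⟨a, ha, u * c, mul_mem hu (Submonoid.subset_closure hc), (mul_assoc ..).symm⟩

theorem exists_isBlock_of_mem_mul_closure {x : M}
    (hx : x ∈ (S \ B) * (Submonoid.closure B : Set M)) : ∃ b, IsBlock S B b ∧ b.prod = x := by
  obtain ⟨a, ha, u, hu, rfl⟩ := hx
  obtain ⟨cs, hcs, rfl⟩ := Submonoid.exists_list_of_mem_closure hu
  exact ⟨a :: cs, ⟨a, ha, cs, hcs, rfl⟩, rfl⟩

theorem exists_isBlock_of_forall_mem_mul_closure :
    ∀ {l : List M}, (∀ x ∈ l, x ∈ (S \ B) * (Submonoid.closure B : Set M)) →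
      ∃ L : List (List M), (∀ b ∈ L, IsBlock S B b) ∧ L.map List.prod = l
  | [], _ => ⟨[], by simp⟩
  | x :: l, h => by
    obtain ⟨b, hb, rfl⟩ := exists_isBlock_of_mem_mul_closure (h x (by simp))
    obtain ⟨L, hL, rfl⟩ :=
      exists_isBlock_of_forall_mem_mul_closure (l := l) fun y hy => h y (List.mem_cons_of_mem _ hy)
    exact ⟨b :: L, List.forall_mem_cons.2 ⟨hb, hL⟩, rfl⟩

theorem IsCode.sdiff_mul_closure (hS : IsCode S) (hB : B ⊆ S) :
    IsCode ((S \ B) * (Submonoid.closure B : Set M)) := by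
  classical
  intro l₁ h₁ l₂ h₂ h
  obtain ⟨L₁, hL₁, rfl⟩ := exists_isBlock_of_forall_mem_mul_closure h₁
  obtain ⟨L₂, hL₂, rfl⟩ := exists_isBlock_of_forall_mem_mul_closure h₂
  have mem_flatten {L : List (List M)} (hL : ∀ b ∈ L, IsBlock S B b) : ∀ x ∈ L.flatten, x ∈ S := by
    simp only [List.mem_flatten, forall_exists_index, and_imp]
    exact fun x b hb hxb => (hL b hb).forall_mem hB x hxb
  have splitBy_flatten {L : List (List M)} (hL : ∀ b ∈ L, IsBlock S B b) :
      L.flatten.splitBy (fun _ y => decide (y ∈ B)) = L :=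
    List.splitBy_flatten_of_forall_eq_cons fun b hb => by
      obtain ⟨a, ha, cs, hcs, rfl⟩ := hL b hb
      exact ⟨a, ha.2, cs, hcs, rfl⟩
  have hflat : L₁.flatten = L₂.flatten :=
    hS (mem_flatten hL₁) (mem_flatten hL₂) (by simpa [List.prod_flatten] using h)
  rw [← splitBy_flatten hL₁, hflat, splitBy_flatten hL₂]

theorem IsCode.disjoint_sdiff_mul_closure (hS : IsCode S) (hB : B ⊆ S) :
    Disjoint B ((S \ B) * (Submonoid.closure B : Set M)) := by
  refine Set.disjoint_left.2 fun x hxB hx => ?_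
  obtain ⟨b, hb, rfl⟩ := exists_isBlock_of_mem_mul_closure hx
  have hb_eq : [b.prod] = b :=
    hS (by simpa using hB hxB) (hb.forall_mem hB) (List.prod_singleton ..)
  obtain ⟨a, ha, cs, -, rfl⟩ := hb
  exact ha.2 ((List.cons.inj hb_eq).1 ▸ hxB)

theorem IsCode.disjoint_mul (hS : IsCode S) (hB : B ⊆ S) :
    Disjoint S ((S \ B) * (Submonoid.closure B : Set M) * B) := by
  refine Set.disjoint_left.2 fun x hxS ⟨z, hz, c, hc, hx⟩ => ?_
  obtain ⟨b, hb, rfl⟩ := exists_isBlock_of_mem_mul_closure hz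
  have : [x] = b ++ [c] :=
    hS (by simpa using hxS) (hb.forall_mem_append_singleton hB hc) (by simpa using hx.symm)
  obtain ⟨a, -, cs, -, rfl⟩ := hb
  simpa using congrArg List.length this

theorem IsCode.injOn_mul (hS : IsCode S) (hB : B ⊆ S) :
    Set.InjOn (fun p : M × M => p.1 * p.2) (((S \ B) * (Submonoid.closure B : Set M)) ×ˢ B) := by
  rintro ⟨z, c⟩ ⟨hz, hc⟩ ⟨z', c'⟩ ⟨hz', hc'⟩ h
  obtain ⟨b, hb, rfl⟩ := exists_isBlock_of_mem_mul_closure hz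
  obtain ⟨b', hb', rfl⟩ := exists_isBlock_of_mem_mul_closure hz'
  have : b ++ [c] = b' ++ [c'] :=
    hS (hb.forall_mem_append_singleton hB hc) (hb'.forall_mem_append_singleton hB hc')
      (by simpa using h)
  obtain ⟨rfl, h⟩ := List.append_inj' this rfl
  simp_all

end Code

theorem finsum_mem_prod_mul {α β R : Type*} [NonUnitalNonAssocSemiring R] {s : Set α} {t : Set β}
    (hs : s.Finite) (ht : t.Finite) (f : α → R) (g : β → R) :
    ∑ᶠ p ∈ s ×ˢ t, f p.1 * g p.2 = (∑ᶠ a ∈ s, f a) * ∑ᶠ b ∈ t, g b := by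
  rw [finsum_mem_eq_finite_toFinset_sum _ (hs.prod ht), ← Set.Finite.toFinset_prod,
    Finset.sum_product, finsum_mem_eq_finite_toFinset_sum _ hs,
    finsum_mem_eq_finite_toFinset_sum _ ht, Finset.sum_mul_sum]

namespace FreeMonoid

@[simp]
theorem wt_of (a : ℕ+) : (of a).wt = a := by
  simp [wt]

@[simp]
theorem wt_mul (v w : FreeMonoid ℕ+) : (v * w).wt = v.wt + w.wt := by
  simp [wt]

theorem finite_setOf_wt_eq (k : ℕ) : {w : FreeMonoid ℕ+ | w.wt = k}.Finite := by
  have hinj : Function.Injective fun w : FreeMonoid ℕ+ => w.toList.map ((↑) : ℕ+ → ℕ) :=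
    (List.map_injective_iff.2 PNat.coe_injective).comp toList.injective
  refine ((Set.finite_range (Composition.blocks (n := k))).preimage hinj.injOn).subset ?_
  rintro w rfl
  exact ⟨⟨_, by simp, rfl⟩, rfl⟩

theorem isCode_range_of : IsCode (Set.range (of : ℕ+ → FreeMonoid ℕ+)) := by
  have key : ∀ l : List (FreeMonoid ℕ+), (∀ x ∈ l, x ∈ Set.range of) →
      l.prod.toList.map of = l := by
    intro l hl
    induction l with
    | nil => rfl
    | cons x l ih =>
      obtain ⟨a, rfl⟩ := hl x (by simp)
      rw [List.prod_cons, toList_mul, toList_of, List.singleton_append, List.map_cons,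
        ih fun y hy => hl y (List.mem_cons_of_mem _ hy)]
  intro l₁ h₁ l₂ h₂ h
  rw [← key l₁ h₁, h, key l₂ h₂]

end FreeMonoid

noncomputable def weightSum (S : Set (FreeMonoid ℕ+)) (k : ℕ) : MonoidAlgebra ℚ (FreeMonoid ℕ+) :=
  ∑ᶠ w ∈ {w | w ∈ S ∧ w.wt = k}, MonoidAlgebra.of ℚ (FreeMonoid ℕ+) w

section WeightSum

variable {S T : Set (FreeMonoid ℕ+)}

theorem finite_setOf_mem_and_wt_eq (S : Set (FreeMonoid ℕ+)) (k : ℕ) :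
    {w | w ∈ S ∧ w.wt = k}.Finite :=
  (finite_setOf_wt_eq k).subset fun _ h => h.2

theorem weightSum_union (h : Disjoint S T) (k : ℕ) :
    weightSum (S ∪ T) k = weightSum S k + weightSum T k := by
  rw [weightSum, weightSum, weightSum, ← finsum_mem_union
    (h.mono (fun _ hw => hw.1) fun _ hw => hw.1) (finite_setOf_mem_and_wt_eq S k)
    (finite_setOf_mem_and_wt_eq T k)]
  congr 1
  ext w
  simp only [Set.mem_union, Set.mem_ofPred_eq, or_and_right]

theorem weightSum_of_forall_wt_eq {m : ℕ} (hT : ∀ w ∈ T, w.wt = m) (k : ℕ) :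
    weightSum T k = if k = m then ∑ᶠ w ∈ T, MonoidAlgebra.of ℚ _ w else 0 := by
  split_ifs with hk
  · subst hk
    exact finsum_mem_congr (Set.ext fun w => ⟨fun h => h.1, fun h => ⟨h, hT w h⟩⟩) fun _ _ => rfl
  · have hempty : {w | w ∈ T ∧ w.wt = k} = ∅ :=
      Set.eq_empty_of_forall_notMem fun w hw => hk (hw.2.symm.trans (hT w hw.1))
    rw [weightSum, hempty, finsum_mem_empty]

theorem weightSum_mul {m : ℕ} (hinj : Set.InjOn (fun p => p.1 * p.2) (S ×ˢ T))
    (hT : ∀ w ∈ T, w.wt = m) (k : ℕ) :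
    weightSum (S * T) (k + m) = weightSum S k * ∑ᶠ w ∈ T, MonoidAlgebra.of ℚ _ w := by
  have hslice : {w | w ∈ S * T ∧ w.wt = k + m} =
      (fun p => p.1 * p.2) '' ({w | w ∈ S ∧ w.wt = k} ×ˢ T) := by
    ext w
    constructor
    · rintro ⟨⟨s, hs, t, ht, rfl⟩, hw⟩
      rw [wt_mul, hT t ht, Nat.add_right_cancel_iff] at hw
      exact ⟨(s, t), ⟨⟨hs, hw⟩, ht⟩, rfl⟩
    · rintro ⟨⟨s, t⟩, ⟨⟨hs, hw⟩, ht⟩, rfl⟩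
      exact ⟨⟨s, hs, t, ht, rfl⟩, by rw [wt_mul, hw, hT t ht]⟩
  rw [weightSum, hslice, finsum_mem_image (hinj.mono (Set.prod_mono (fun _ h => h.1) le_rfl))]
  simp only [map_mul]
  exact finsum_mem_prod_mul (finite_setOf_mem_and_wt_eq S k)
    ((finite_setOf_wt_eq m).subset hT) _ _

end WeightSum

theorem IsCode.weightSum_add_weightSum_mul {S B : Set (FreeMonoid ℕ+)} {m : ℕ} (hS : IsCode S)
    (hB : B ⊆ S) (hBm : ∀ w ∈ B, w.wt = m) (k : ℕ) :
    weightSum S (k + m) +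
        weightSum ((S \ B) * (Submonoid.closure B : Set _)) k *
          ∑ᶠ w ∈ B, MonoidAlgebra.of ℚ _ w =
      (if k = 0 then ∑ᶠ w ∈ B, MonoidAlgebra.of ℚ _ w else 0) +
        weightSum ((S \ B) * (Submonoid.closure B : Set _)) (k + m) := by
  set T := (S \ B) * (Submonoid.closure B : Set (FreeMonoid ℕ+))
  have hunion : S ∪ T * B = B ∪ T :=
    calc S ∪ T * B = (B ∪ S \ B) ∪ T * B := by rw [Set.union_sdiff_cancel hB]
      _ = B ∪ T := by rw [Set.union_assoc, ← mul_closure_eq_union_mul]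
  rw [← weightSum_mul (hS.injOn_mul hB) hBm, ← weightSum_union (hS.disjoint_mul hB), hunion,
    weightSum_union (hS.disjoint_sdiff_mul_closure hB), weightSum_of_forall_wt_eq hBm]
  simp only [Nat.add_eq_right, T]

/-- With `F m k` standing for the weight-`k` part of `Z_m` and `q m` for `C_m`, this is
`Z_m = C_m + Z_{m+1} (1 - C_m)` read in weight `k + m`. -/
structure LazardRecursion {R : Type*} [Semiring R] (q : ℕ → R) (F : ℕ → ℕ → R) : Prop where
  eq_zero_of_lt {m k : ℕ} : k < m → F m k = 0
  add_mul_eq {m : ℕ} (hm : 0 < m) (k : ℕ) :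
    F m (k + m) + F (m + 1) k * q m = (if k = 0 then q m else 0) + F (m + 1) (k + m)

theorem LazardRecursion.eq {R : Type*} [Semiring R] [IsRightCancelAdd R] {q : ℕ → R}
    {F G : ℕ → ℕ → R} (hF : LazardRecursion q F) (hG : LazardRecursion q G) {m : ℕ} (hm : 0 < m)
    (k : ℕ) : F m k = G m k := by
  suffices ∀ d m k, 0 < m → k < m + d → F m k = G m k from this (k + 1) m k hm (by omega)
  intro d
  induction d with
  | zero => exact fun m k _ hk => (hF.eq_zero_of_lt hk).trans (hG.eq_zero_of_lt hk).symm
  | succ d ih =>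
    intro m k hm hk
    rcases lt_or_ge k m with hkm | hkm
    · exact (hF.eq_zero_of_lt hkm).trans (hG.eq_zero_of_lt hkm).symm
    obtain ⟨j, rfl⟩ := Nat.exists_eq_add_of_le' hkm
    apply add_right_cancel (b := F (m + 1) j * q m)
    rw [hF.add_mul_eq hm j, ih (m + 1) j (by omega) (by omega),
      ih (m + 1) (j + m) (by omega) (by omega), hG.add_mul_eq hm j]

theorem lazardZ_succ_succ (n : ℕ) :
    lazardZ (n + 2) =
      (lazardZ (n + 1) \ lazardC (n + 1)) * (Submonoid.closure (lazardC (n + 1)) : Set _) := by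
  ext w
  constructor
  · rintro ⟨z, hz, hzn, u, hu, rfl⟩
    exact ⟨z, ⟨hz, fun h => hzn h.2⟩, u, hu, rfl⟩
  · rintro ⟨z, ⟨hz, hzn⟩, u, hu, rfl⟩
    exact ⟨z, hz, fun h => hzn ⟨hz, h⟩, u, hu, rfl⟩

theorem le_wt_of_mem_lazardZ : ∀ {n : ℕ} {w : FreeMonoid ℕ+}, w ∈ lazardZ n → n ≤ w.wt
  | 0, _, _ => Nat.zero_le _
  | 1, _, ⟨a, rfl⟩ => by rw [wt_of]; exact a.pos
  | n + 2, _, ⟨z, hz, hzn, _, _, rfl⟩ => by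
    have := le_wt_of_mem_lazardZ hz
    simp only [wt_mul]
    omega

theorem isCode_lazardZ : ∀ n, IsCode (lazardZ (n + 1))
  | 0 => isCode_range_of
  | n + 1 => lazardZ_succ_succ n ▸ (isCode_lazardZ n).sdiff_mul_closure fun _ h => h.1

theorem lazardRecursion_weightSum_lazardZ :
    LazardRecursion Q fun m k => weightSum (lazardZ m) k where
  eq_zero_of_lt {m k} hk := by
    have hempty : {w | w ∈ lazardZ m ∧ w.wt = k} = ∅ :=
      Set.eq_empty_of_forall_notMem fun w hw => (le_wt_of_mem_lazardZ hw.1).not_gt (hw.2 ▸ hk)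
    rw [weightSum, hempty, finsum_mem_empty]
  add_mul_eq {m} hm k := by
    obtain ⟨n, rfl⟩ := Nat.exists_eq_add_one_of_ne_zero hm.ne'
    have := (isCode_lazardZ n).weightSum_add_weightSum_mul (B := lazardC (n + 1))
      (fun _ h => h.1) (fun _ h => h.2) k
    rwa [← lazardZ_succ_succ] at this

theorem weightSum_lazardZ_one (a : ℕ+) :
    weightSum (lazardZ 1) a = MonoidAlgebra.of ℚ _ (FreeMonoid.of a) := by
  have hslice : {w | w ∈ lazardZ 1 ∧ w.wt = a} = {FreeMonoid.of a} := by
    ext w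
    constructor
    · rintro ⟨⟨b, rfl⟩, hb⟩
      rw [wt_of] at hb
      rw [PNat.eq hb, Set.mem_singleton_iff]
    · rintro rfl
      exact ⟨⟨a, rfl⟩, wt_of a⟩
  rw [weightSum, hslice, finsum_mem_singleton]

def strictAntiLists (m k : ℕ) : Set (List ℕ) :=
  {l | l ≠ [] ∧ l.IsChain (· > ·) ∧ (∀ i ∈ l, m ≤ i) ∧ l.sum = k}

theorem finite_strictAntiLists {m : ℕ} (hm : 0 < m) (k : ℕ) :
    (strictAntiLists m k).Finite :=
  (Set.finite_range (Composition.blocks (n := k))).subset fun l hl =>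
    ⟨⟨l, fun hi => hm.trans_le (hl.2.2.1 _ hi), hl.2.2.2⟩, rfl⟩

theorem strictAntiLists_eq_empty_of_lt {m k : ℕ} (h : k < m) :
    strictAntiLists m k = ∅ := by
  refine Set.eq_empty_of_forall_notMem fun l ⟨hne, _, hge, hsum⟩ => ?_
  obtain ⟨i, hi⟩ := List.exists_mem_of_ne_nil l hne
  have := List.le_sum_of_mem hi
  have := hge i hi
  omega

theorem strictAntiLists_self (m : ℕ) : strictAntiLists m m = {[m]} := by
  ext l
  constructor
  · rintro ⟨hne, hchain, hge, hsum⟩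
    obtain ⟨l, x, rfl⟩ := (List.eq_nil_or_concat' _).resolve_left hne
    have hx := hge x (by simp)
    rw [List.sum_append, List.sum_singleton] at hsum
    have hl : l = [] := List.eq_nil_iff_forall_not_mem.2 fun i hi => by
      have := (List.isChain_gt_append_singleton.1 hchain).2 i hi
      have := List.le_sum_of_mem hi
      omega
    subst hl
    rw [List.sum_nil, zero_add] at hsum
    rw [List.nil_append, hsum, Set.mem_singleton_iff]
  · rintro rfl
    exact ⟨by simp, List.isChain_singleton _, by simp, by simp⟩

theorem strictAntiLists_add {m k : ℕ} (hk : 0 < k) :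
    strictAntiLists m (k + m) =
      strictAntiLists (m + 1) (k + m) ∪ (· ++ [m]) '' strictAntiLists (m + 1) k := by
  ext l
  constructor
  · rintro ⟨hne, hchain, hge, hsum⟩
    obtain ⟨l, x, rfl⟩ := (List.eq_nil_or_concat' _).resolve_left hne
    rw [List.isChain_gt_append_singleton] at hchain
    have hx := hge x (by simp)
    rcases hx.eq_or_lt with rfl | hx
    · refine .inr ⟨l, ⟨fun h => ?_, hchain.1, hchain.2, ?_⟩, rfl⟩ <;>
        simp_all [List.sum_append]
    · refine .inl ⟨hne, List.isChain_gt_append_singleton.2 hchain, fun i hi => ?_, hsum⟩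
      rcases List.mem_append.1 hi with hi | hi
      · exact hx.trans (hchain.2 i hi)
      · exact (List.mem_singleton.1 hi) ▸ hx
  · rintro (⟨hne, hchain, hge, hsum⟩ | ⟨l, ⟨-, hchain, hge, hsum⟩, rfl⟩)
    · exact ⟨hne, hchain, fun i hi => (hge i hi).trans' m.le_succ, hsum⟩
    · refine ⟨by simp, List.isChain_gt_append_singleton.2 ⟨hchain, hge⟩, fun i hi => ?_, ?_⟩
      · rcases List.mem_append.1 hi with hi | hi
        · exact Nat.le_of_succ_le (hge i hi)
        · exact (List.mem_singleton.1 hi).ge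
      · rw [List.sum_append, List.sum_singleton, hsum]

theorem disjoint_strictAntiLists_image_append (m k n : ℕ) :
    Disjoint (strictAntiLists (m + 1) n) ((· ++ [m]) '' strictAntiLists (m + 1) k) :=
  Set.disjoint_left.2 fun _ ⟨_, _, hge, _⟩ ⟨_, _, hl⟩ => by
    have := hge m (by simp [← hl])
    omega

section AltProdSum

variable {R : Type*} [Ring R] (q : ℕ → R)

noncomputable def altProdSum (m k : ℕ) : R :=
  ∑ᶠ l ∈ strictAntiLists m k, (-1 : R) ^ (l.length + 1) * (l.map q).prod

theorem lazardRecursion_altProdSum : LazardRecursion q (altProdSum q) where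
  eq_zero_of_lt hk := by rw [altProdSum, strictAntiLists_eq_empty_of_lt hk, finsum_mem_empty]
  add_mul_eq {m} _ k := by
    rcases k.eq_zero_or_pos with rfl | hk
    · rw [zero_add, altProdSum, altProdSum, altProdSum, strictAntiLists_self,
        strictAntiLists_eq_empty_of_lt m.succ_pos,
        strictAntiLists_eq_empty_of_lt m.lt_succ_self]
      simp
    have hterm (l : List ℕ) : (-1 : R) ^ ((l ++ [m]).length + 1) * ((l ++ [m]).map q).prod =
        -((-1 : R) ^ (l.length + 1) * (l.map q).prod) * q m := by
      simp [pow_succ, mul_assoc]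
    have hfin := finite_strictAntiLists (Nat.add_one_pos m)
    rw [altProdSum, strictAntiLists_add hk,
      finsum_mem_union (disjoint_strictAntiLists_image_append m k _) (hfin _)
        ((hfin k).image _),
      finsum_mem_image (List.append_left_injective [m]).injOn,
      finsum_mem_congr rfl fun l _ => hterm l,
      ← finsum_mem_mul' _ _ (hfin k), finsum_mem_neg_distrib _ (hfin k), if_neg hk.ne', zero_add,
      neg_mul]
    exact neg_add_cancel_right _ _

end AltProdSum

/-- The expansion of the elementary symmetric function `Λ̃_n` (the single-letter
word `n`) on the basis of products of Witt symmetric functions: the sum of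
`(−1)^{k+1} Q_{i₁}⋯Q_{i_k}` over all strictly decreasing sequences
`i₁ > ⋯ > i_k` of positive integers with `i₁ + ⋯ + i_k = n`, such sequences
being encoded as lists. -/
theorem elementary_eq_alternating_sum_of_Q_products (n : ℕ) (hn : 1 ≤ n) :
    MonoidAlgebra.of ℚ (FreeMonoid ℕ+) (FreeMonoid.of ⟨n, hn⟩) =
    ∑ᶠ l ∈ {l : List ℕ | l ≠ [] ∧ l.Chain' (· > ·) ∧ (∀ i ∈ l, 1 ≤ i) ∧
        l.sum = n},
      ((-1 : ℚ) ^ (l.length + 1)) • ((l.map Q).prod) := by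
  calc MonoidAlgebra.of ℚ (FreeMonoid ℕ+) (FreeMonoid.of ⟨n, hn⟩)
      = weightSum (lazardZ 1) n := (weightSum_lazardZ_one ⟨n, hn⟩).symm
    _ = altProdSum Q 1 n :=
      lazardRecursion_weightSum_lazardZ.eq (lazardRecursion_altProdSum Q) one_pos n
    _ = _ := finsum_mem_congr rfl fun l _ => by
      rw [Algebra.smul_def, map_pow, map_neg, map_one]
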